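/- arXiv:1011.0554 — 2 statements merged into one kernel-verified Lean document; each statement's English description precedes it below -/
import Mathlib

section
/- For n = 2(k+1) with k ≥ 0, let S ⊂ {0, 1, ..., n} be any subset of cardinality n-1 such that neither {0, 1, ..., n/2} ⊆ S nor {n/2, n/2+1, ..., n} ⊆ S. Then the vectors {η_j : j ∈ S} form a ℤ-basis of ℤ^{n-1}. -/
/-- The characteristic vectors `η_j ∈ ℤ^{n-1}` (coordinates indexed by `Fin (n-1)`,
where index `i` corresponds to the standard basis vector `e_{i+1}`):
`η_j = e_{j+1}` for `0 ≤ j < n/2 - 1`, `η_{n/2-1} = e_1 + ⋯ + e_{n/2}`,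
`η_j = e_j` for `n/2 ≤ j < n`, and `η_n = e_{n/2} + ⋯ + e_{n-1}`. -/
def eta (n j : ℕ) : Fin (n - 1) → ℤ := fun i =>
  if j < n / 2 - 1 then (if i.val = j then 1 else 0)
  else if j = n / 2 - 1 then (if i.val < n / 2 then 1 else 0)
  else if j < n then (if i.val + 1 = j then 1 else 0)
  else (if n / 2 ≤ i.val + 1 then 1 else 0)

/-!
Write `n = 2(k+1)`. The `η_j` with `j ∉ {k, n}` are the standard basis `e_0, …, e_{2k}` of
`ℤ^{n-1}` (with `e_i = η_i` for `i < k` and `e_i = η_{i+1}` for `i ≥ k`), while `η_k` and `η_n`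
are the sums of the blocks `e_0, …, e_k` and `e_k, …, e_{2k}`, which share `e_k`. The two omitted
indices are `a ≤ k + 1 ≤ b`, so `e_k` is recovered from a block sum whenever `η_{k+1} = e_k`
is omitted, and afterwards each block misses at most one vector, recovered by subtracting the
others from its sum. A spanning family of `n - 1` vectors in `ℤ^{n-1}` is a basis.
-/

theorem Submodule.mem_of_sum_filter_mem {R M ι : Type*} [Ring R] [AddCommGroup M] [Module R M]
    [Fintype ι] (P : Submodule R M) {p : ι → Prop} [DecidablePred p] {f : ι → M} {i : ι}
    (hi : p i) (hsum : ∑ j with p j, f j ∈ P) (hf : ∀ j, p j → j ≠ i → f j ∈ P) : f i ∈ P := by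
  classical
  have hi' : i ∈ Finset.univ.filter p := Finset.mem_filter_univ i |>.2 hi
  have hrest : ∑ j ∈ (Finset.univ.filter p).erase i, f j ∈ P :=
    P.sum_mem fun j hj => hf j (Finset.mem_filter_univ j |>.1 (Finset.mem_of_mem_erase hj))
      (Finset.ne_of_mem_erase hj)
  simpa [← Finset.add_sum_erase _ f hi'] using P.sub_mem hsum hrest

section eta

variable {k : ℕ}

theorem eta_of_lt (i : Fin (2 * (k + 1) - 1)) (hi : (i : ℕ) < k) :
    eta (2 * (k + 1)) i = Pi.single i 1 := by
  funext x
  simp only [eta, Pi.single_apply, Fin.ext_iff]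
  rw [if_pos (by omega)]

theorem eta_succ (i : Fin (2 * (k + 1) - 1)) (hi : k ≤ (i : ℕ)) :
    eta (2 * (k + 1)) (i + 1) = Pi.single i 1 := by
  have := i.isLt
  funext x
  simp only [eta, Pi.single_apply, Fin.ext_iff]
  rw [if_neg (by omega), if_neg (by omega), if_pos (by omega)]
  exact if_congr (by omega) rfl rfl

theorem eta_half :
    eta (2 * (k + 1)) k = ∑ i : Fin (2 * (k + 1) - 1) with i.val ≤ k, Pi.single i 1 := by
  funext x
  simp only [eta, Finset.sum_apply, Pi.single_apply, Finset.sum_ite_eq, Finset.mem_filter,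
    Finset.mem_univ, true_and]
  rw [if_neg (by omega), if_pos (by omega)]
  exact if_congr (by omega) rfl rfl

theorem eta_self :
    eta (2 * (k + 1)) (2 * (k + 1)) =
      ∑ i : Fin (2 * (k + 1) - 1) with k ≤ i.val, Pi.single i 1 := by
  funext x
  simp only [eta, Finset.sum_apply, Pi.single_apply, Finset.sum_ite_eq, Finset.mem_filter,
    Finset.mem_univ, true_and]
  rw [if_neg (by omega), if_neg (by omega), if_neg (by omega)]
  exact if_congr (by omega) rfl rfl

end eta

theorem eq_top_of_eta_mem {k a b : ℕ} {P : Submodule ℤ (Fin (2 * (k + 1) - 1) → ℤ)}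
    (hP : ∀ j ≤ 2 * (k + 1), j ≠ a → j ≠ b → eta (2 * (k + 1)) j ∈ P)
    (ha : a ≤ k + 1) (hb : k + 1 ≤ b) : P = ⊤ := by
  have hlow (i : Fin (2 * (k + 1) - 1)) (hi : i.val < k) (hia : i.val ≠ a) :
      Pi.single i 1 ∈ P :=
    eta_of_lt i hi ▸ hP i (by omega) hia (by omega)
  have hhigh (i : Fin (2 * (k + 1) - 1)) (hi : k ≤ i.val) (hia : i.val + 1 ≠ a)
      (hib : i.val + 1 ≠ b) : Pi.single i 1 ∈ P :=
    eta_succ i hi ▸ hP (i + 1) (by omega) hia hib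
  have hlow_sum (hka : k ≠ a) := eta_half ▸ hP k (by omega) hka (by omega)
  have hhigh_sum (hnb : 2 * (k + 1) ≠ b) := eta_self ▸ hP _ le_rfl (by omega) hnb
  have hmid (i : Fin (2 * (k + 1) - 1)) (hi : i.val = k) : Pi.single i 1 ∈ P := by
    by_cases hak : a = k + 1
    · exact P.mem_of_sum_filter_mem (f := (Pi.single · 1)) hi.le (hlow_sum (by omega))
        fun j hj hji => hlow j (by omega) (by omega)
    by_cases hbk : b = k + 1
    · exact P.mem_of_sum_filter_mem (f := (Pi.single · 1)) hi.ge (hhigh_sum (by omega))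
        fun j hj hji => hhigh j hj (by omega) (by omega)
    exact hhigh i hi.ge (by omega) (by omega)
  rw [eq_top_iff, ← (Pi.basisFun ℤ _).span_eq, Submodule.span_le]
  rintro _ ⟨i, rfl⟩
  rw [Pi.basisFun_apply]
  rcases lt_trichotomy i.val k with hi | hi | hi
  · by_cases hia : i.val = a
    · refine P.mem_of_sum_filter_mem (f := (Pi.single · 1)) hi.le (hlow_sum (by omega))
        fun j hj hji => ?_
      obtain hjk | hjk := hj.lt_or_eq
      exacts [hlow j hjk (by omega), hmid j hjk]
    · exact hlow i hi hia
  · exact hmid i hi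
  · by_cases hib : i.val + 1 = b
    · refine P.mem_of_sum_filter_mem (f := (Pi.single · 1)) hi.le (hhigh_sum (by omega))
        fun j hj hji => ?_
      obtain hkj | hkj := hj.lt_or_eq
      exacts [hhigh j hkj.le (by omega) (by omega), hmid j hkj.symm]
    · exact hhigh i hi.le (by omega) hib

theorem eta_subset_basis (k n : ℕ) (hn : n = 2 * (k + 1)) (S : Finset ℕ)
    (hSsub : S ⊆ Finset.range (n + 1)) (hcard : S.card = n - 1)
    (h1 : ¬ (Finset.range (n / 2 + 1) : Finset ℕ) ⊆ S)
    (h2 : ¬ (Finset.Icc (n / 2) n : Finset ℕ) ⊆ S) :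
    ∃ b : Module.Basis S ℤ (Fin (n - 1) → ℤ), ∀ j : S, b j = eta n j := by
  subst hn
  obtain ⟨x, y, -, hxy⟩ := Finset.card_eq_two.1 <| by
    rw [Finset.card_sdiff_of_subset hSsub, Finset.card_range, hcard]
    omega
  have hmissing (j : ℕ) (hj : j ≤ 2 * (k + 1)) (hjS : j ∉ S) : j = x ∨ j = y := by
    have hjT : j ∈ Finset.range (2 * (k + 1) + 1) \ S :=
      Finset.mem_sdiff.2 ⟨Finset.mem_range.2 (by omega), hjS⟩
    simpa [hxy] using hjT
  obtain ⟨a, ha, haS⟩ := Finset.not_subset.1 h1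
  obtain ⟨b, hb, hbS⟩ := Finset.not_subset.1 h2
  simp only [Finset.mem_range, Finset.mem_Icc] at ha hb
  have := hmissing a (by omega) haS
  have := hmissing b (by omega) hbS
  have hspan : ⊤ ≤ Submodule.span ℤ (Set.range fun j : S => eta (2 * (k + 1)) j) := by
    refine (eq_top_of_eta_mem (a := min x y) (b := max x y) (fun j hj hjx hjy => ?_)
      (by omega) (by omega)).ge
    have hjS : j ∈ S := by
      by_contra hjS
      have := hmissing j hj hjS
      omega
    exact Submodule.subset_span ⟨⟨j, hjS⟩, rfl⟩
  exact ⟨basisOfTopLeSpanOfCardEqFinrank _ hspan (by simp [hcard]), fun j => by simp⟩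
end

section
/- Let e be an edge of Δ^n (the convex hull of two vertices A_p, A_q, p < q) that is not contained in F' ∪ F'', where F' = conv{A_0, ..., A_{n/2-1}} and F'' = conv{A_{n/2+1}, ..., A_n}. Write e = ∩_{j=1}^{n-1} Δ_{l_j}^{n-1} where {l_1, ..., l_{n-1}} = {0, ..., n} \ {p, q}. Then the vectors {η_{n-l_1}, ..., η_{n-l_{n-1}}} form a basis of ℤ^{n-1}. -/
/-!
Apart from the two sums `η_{n/2-1} = e_1 + ⋯ + e_{n/2}` and `η_n = e_{n/2} + ⋯ + e_{n-1}`, the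
`η_j` are the standard basis vectors, each occurring once. The edge removes `η_{n-q}` with
`n - q ≤ n/2` and `η_{n-p}` with `n - p ≥ n/2`, so from each of the two blocks
`{e_1, …, e_{n/2}, e_1 + ⋯ + e_{n/2}}` and `{e_{n/2}, …, e_{n-1}, e_{n/2} + ⋯ + e_{n-1}}`
at most one vector is lost, and it is recovered from the others by the sum relation (the
shared vector `e_{n/2}` first). Hence the remaining `n - 1` vectors span `ℤ^{n-1}`, and a
spanning family of `n - 1` vectors in `ℤ^{n-1}` is a basis, since a surjective endomorphism
of `ℤ^{n-1}` is injective.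
-/

open Finset

theorem Submodule.mem_of_sum_mem_of_forall_ne {R M ι : Type*} [Ring R] [AddCommGroup M]
    [Module R M] [DecidableEq ι] {T : Submodule R M} {s : Finset ι} {f : ι → M} {a : ι}
    (ha : a ∈ s) (hsum : ∑ i ∈ s, f i ∈ T) (hne : ∀ i ∈ s, i ≠ a → f i ∈ T) : f a ∈ T := by
  rw [← add_sum_erase s f ha] at hsum
  simpa using
    T.sub_mem hsum (T.sum_mem fun i hi => hne i (mem_of_mem_erase hi) (ne_of_mem_erase hi))

theorem Fin.card_subtype_val_ne_and_ne {m p q : ℕ} (hpq : p ≠ q) (hp : p < m) (hq : q < m) :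
    Fintype.card {l : Fin m // l.val ≠ p ∧ l.val ≠ q} = m - 2 := by
  rw [Fintype.card_subtype]
  have : univ.filter (fun l : Fin m => l.val ≠ p ∧ l.val ≠ q) =
      univ \ {⟨p, hp⟩, ⟨q, hq⟩} := by
    ext l
    simp [Fin.ext_iff]
  rw [this, card_sdiff_of_subset (subset_univ _), card_univ, Fintype.card_fin,
    card_pair (by simpa [Fin.ext_iff] using hpq)]


variable {n a b : ℕ}

theorem eta_val_eq_single {i : Fin (n - 1)} (hi : i.val < n / 2 - 1) :
    eta n i = Pi.single i 1 := by
  ext i'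
  simp only [eta, if_pos hi, Pi.single_apply, Fin.ext_iff]

theorem eta_val_add_one_eq_single {i : Fin (n - 1)} (hi : n / 2 - 1 ≤ i.val) :
    eta n (i + 1) = Pi.single i 1 := by
  have := i.isLt
  ext i'
  simp only [eta, Pi.single_apply, Fin.ext_iff]
  rw [if_neg (by omega), if_neg (by omega), if_pos (by omega)]
  simp

theorem eta_half_sub_one :
    eta n (n / 2 - 1) =
      ∑ i ∈ univ.filter (fun i : Fin (n - 1) => i.val < n / 2), Pi.single i 1 := by
  ext i
  simp [eta]

theorem eta_self_s16 (hn : 0 < n) :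
    eta n n =
      ∑ i ∈ univ.filter (fun i : Fin (n - 1) => n / 2 - 1 ≤ i.val), Pi.single i 1 := by
  ext i
  simp only [eta, Finset.sum_apply, sum_pi_single, mem_filter, mem_univ, true_and]
  rw [if_neg (by omega), if_neg (by omega), if_neg (by omega)]
  split_ifs <;> omega

def etaSpan (n a b : ℕ) : Submodule ℤ (Fin (n - 1) → ℤ) :=
  Submodule.span ℤ (eta n '' {j | j ≤ n ∧ j ≠ a ∧ j ≠ b})

theorem eta_mem_etaSpan {j : ℕ} (hj : j ≤ n) (ha : j ≠ a) (hb : j ≠ b) :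
    eta n j ∈ etaSpan n a b :=
  Submodule.subset_span ⟨j, ⟨hj, ha, hb⟩, rfl⟩

theorem single_mem_etaSpan_of_val_lt_half (ha : a ≠ n / 2 - 1) (hb : n / 2 ≤ b)
    {i : Fin (n - 1)} (hi : i.val < n / 2)
    (hothers : ∀ j : Fin (n - 1), j.val < n / 2 → j ≠ i → Pi.single j 1 ∈ etaSpan n a b) :
    Pi.single i (1 : ℤ) ∈ etaSpan n a b := by
  have := i.isLt
  have hsum := eta_mem_etaSpan (n := n) (b := b) (j := n / 2 - 1) (by omega) ha.symm (by omega)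
  rw [eta_half_sub_one] at hsum
  exact Submodule.mem_of_sum_mem_of_forall_ne (f := fun j => Pi.single j 1)
    (by simpa using hi) hsum fun j hj hji => hothers j (by simpa using hj) hji

theorem single_mem_etaSpan_of_half_sub_one_le (ha : a ≤ n / 2) (hb : b ≠ n)
    {i : Fin (n - 1)} (hi : n / 2 - 1 ≤ i.val)
    (hothers : ∀ j : Fin (n - 1), n / 2 - 1 ≤ j.val → j ≠ i → Pi.single j 1 ∈ etaSpan n a b) :
    Pi.single i (1 : ℤ) ∈ etaSpan n a b := by
  have := i.isLt
  have hsum := eta_mem_etaSpan (a := a) (j := n) le_rfl (by omega) hb.symm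
  rw [eta_self_s16 (by omega)] at hsum
  exact Submodule.mem_of_sum_mem_of_forall_ne (f := fun j => Pi.single j 1)
    (by simpa using hi) hsum fun j hj hji => hothers j (by simpa using hj) hji

theorem single_mem_etaSpan_of_val_eq_half_sub_one (ha : a ≤ n / 2) (hb : n / 2 ≤ b)
    {i : Fin (n - 1)} (hi : i.val = n / 2 - 1) : Pi.single i (1 : ℤ) ∈ etaSpan n a b := by
  have := i.isLt
  have hne : ∀ j : Fin (n - 1), j ≠ i → j.val ≠ n / 2 - 1 := fun j hji h =>
    hji (Fin.ext (h.trans hi.symm))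
  rcases eq_or_ne a (n / 2) with rfl | ha'
  · refine single_mem_etaSpan_of_val_lt_half (by omega) hb (by omega) fun j hj hji => ?_
    rw [← eta_val_eq_single (by have := hne j hji; omega)]
    exact eta_mem_etaSpan (by omega) (by omega) (by omega)
  rcases eq_or_ne b (n / 2) with rfl | hb'
  · refine single_mem_etaSpan_of_half_sub_one_le ha (by omega) (by omega) fun j hj hji => ?_
    have := j.isLt
    rw [← eta_val_add_one_eq_single hj]
    exact eta_mem_etaSpan (by omega) (by omega) (by have := hne j hji; omega)
  rw [← eta_val_add_one_eq_single hi.ge]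
  exact eta_mem_etaSpan (by omega) (by omega) (by omega)

theorem single_mem_etaSpan (ha : a ≤ n / 2) (hb : n / 2 ≤ b) (i : Fin (n - 1)) :
    Pi.single i (1 : ℤ) ∈ etaSpan n a b := by
  have := i.isLt
  rcases lt_trichotomy i.val (n / 2 - 1) with hlt | heq | hgt
  · have hdirect : ∀ j : Fin (n - 1), j.val < n / 2 - 1 → j.val ≠ a →
        Pi.single j (1 : ℤ) ∈ etaSpan n a b := fun j hj hja => by
      rw [← eta_val_eq_single hj]
      exact eta_mem_etaSpan (by omega) hja (by omega)
    by_cases hia : i.val = a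
    · refine single_mem_etaSpan_of_val_lt_half (by omega) hb (by omega) fun j hj hji => ?_
      rcases eq_or_ne j.val (n / 2 - 1) with hjm | hjm
      · exact single_mem_etaSpan_of_val_eq_half_sub_one ha hb hjm
      · exact hdirect j (by omega) fun h => hji (Fin.ext (h.trans hia.symm))
    · exact hdirect i hlt hia
  · exact single_mem_etaSpan_of_val_eq_half_sub_one ha hb heq
  · have hdirect : ∀ j : Fin (n - 1), n / 2 - 1 < j.val → j.val + 1 ≠ b →
        Pi.single j (1 : ℤ) ∈ etaSpan n a b := fun j hj hjb => by
      have := j.isLt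
      rw [← eta_val_add_one_eq_single hj.le]
      exact eta_mem_etaSpan (by omega) (by omega) hjb
    by_cases hib : i.val + 1 = b
    · refine single_mem_etaSpan_of_half_sub_one_le ha (by omega) hgt.le fun j hj hji => ?_
      rcases eq_or_ne j.val (n / 2 - 1) with hjm | hjm
      · exact single_mem_etaSpan_of_val_eq_half_sub_one ha hb hjm
      · exact hdirect j (by omega) fun h => hji (Fin.ext (by omega))
    · exact hdirect i hgt hib

theorem etaSpan_eq_top (ha : a ≤ n / 2) (hb : n / 2 ≤ b) : etaSpan n a b = ⊤ := by
  rw [eq_top_iff, ← (Pi.basisFun ℤ (Fin (n - 1))).span_eq, Submodule.span_le]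
  rintro _ ⟨i, rfl⟩
  simpa using single_mem_etaSpan ha hb i

/-- For an edge `e = conv{A_p, A_q}` of `Δⁿ` not contained in `F' ∪ F''`
(`F' = conv{A_0,…,A_{n/2-1}}`, `F'' = conv{A_{n/2+1},…,A_n}`), writing
`e = ∩_{l ∉ {p,q}} Δ_l^{n-1}`, the vectors `{η_{n-l} : l ∈ {0,…,n} \ {p,q}}`
form a basis of `ℤ^{n-1}`. -/
theorem eta_edge_basis (k n : ℕ) (hn : n = 2 * (k + 1)) (p q : ℕ)
    (hpq : p < q) (hq : q ≤ n)
    (hF' : ¬ (p ≤ n / 2 - 1 ∧ q ≤ n / 2 - 1))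
    (hF'' : ¬ (n / 2 + 1 ≤ p ∧ n / 2 + 1 ≤ q)) :
    ∃ b : Module.Basis {l : Fin (n + 1) // l.val ≠ p ∧ l.val ≠ q} ℤ (Fin (n - 1) → ℤ),
      ∀ l : {l : Fin (n + 1) // l.val ≠ p ∧ l.val ≠ q}, b l = eta n (n - l.val.val) := by
  have hspan : etaSpan n (n - q) (n - p) ≤
      Submodule.span ℤ (Set.range fun l : {l : Fin (n + 1) // l.val ≠ p ∧ l.val ≠ q} =>
        eta n (n - l.val.val)) := by
    refine Submodule.span_mono ?_
    rintro _ ⟨j, ⟨hj, hjq, hjp⟩, rfl⟩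
    exact ⟨⟨⟨n - j, by omega⟩, show n - j ≠ p by omega, show n - j ≠ q by omega⟩,
      show eta n (n - (n - j)) = eta n j by rw [Nat.sub_sub_self hj]⟩
  rw [etaSpan_eq_top (show n - q ≤ n / 2 by omega) (show n / 2 ≤ n - p by omega)] at hspan
  have hcard := Fin.card_subtype_val_ne_and_ne hpq.ne (by omega) (by omega : q < n + 1)
  exact ⟨basisOfTopLeSpanOfCardEqFinrank _ hspan (by simp [hcard]), fun l => by simp⟩
end
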